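/- In Z_59, the pair X = {0,1,2,3,4,5,6,10,12,13,15,16,19,20,21,25,27,30,31,33,37,38,39,41,43,44,45,52,56}, Y = {0,1,3,4,5,6,7,10,12,13,14,15,17,18,20,23,26,27,28,30,34,35,36,39,43,45,48,50,55} is a difference family in Z_59 with parameters (59; 29, 29; 28), and X is not a difference set in Z_59 (so this Legendre difference family is of type 2). -/
import Mathlib


open Finset

/-- The number of ordered pairs `(a,b) ∈ X × X` with `a - b = s`. -/
def diffCount (X : Finset (ZMod 59)) (s : ZMod 59) : ℕ :=
  ((X ×ˢ X).filter (fun p => p.1 - p.2 = s)).card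

def X : Finset (ZMod 59) := ({0, 1, 2, 3, 4, 5, 6, 10, 12, 13, 15, 16, 19, 20, 21, 25, 27, 30, 31, 33, 37, 38, 39, 41, 43, 44, 45, 52, 56} : Finset (ZMod 59))

def Y : Finset (ZMod 59) := ({0, 1, 3, 4, 5, 6, 7, 10, 12, 13, 14, 15, 17, 18, 20, 23, 26, 27, 28, 30, 34, 35, 36, 39, 43, 45, 48, 50, 55} : Finset (ZMod 59))

set_option maxHeartbeats 8000000 in
set_option maxRecDepth 100000 in
theorem stmt_14 :
    X.card = 29 ∧ Y.card = 29 ∧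
    (∀ s : ZMod 59, s ≠ 0 → diffCount X s + diffCount Y s = 28) ∧
    ¬ ∃ μ : ℕ, ∀ s : ZMod 59, s ≠ 0 → diffCount X s = μ := by
  refine ⟨by decide, by decide, by decide, ?_⟩
  rintro ⟨μ, h⟩
  have h1 : diffCount X 1 = μ := h 1 (by decide)
  have h2 : diffCount X 2 = μ := h 2 (by decide)
  have e1 : diffCount X 1 = 15 := by decide
  have e2 : diffCount X 2 = 14 := by decide
  omega
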